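/- arXiv:1208.5232 — 3 statements merged into one kernel-verified Lean document; each statement's English description precedes it below -/
import Mathlib

section
/- Let (π, U, H) be a representation of a C*-dynamical system (A, α) with π faithful. Then the ideal J = {a ∈ A : U*U π(a) = π(a)} satisfies J ∩ ker α = {0}, i.e. J is orthogonal to the kernel of α. -/
theorem CStarRing.mul_eq_zero_of_conj_mul_star_self_eq_zero
    {B : Type*} [NonUnitalNormedRing B] [StarRing B] [CStarRing B] {u b : B}
    (h : u * (b * star b) * star u = 0) : u * b = 0 := by
  refine (CStarRing.mul_star_self_eq_zero_iff _).mp ?_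
  rw [star_mul, ← h]
  noncomm_ring

/-- `(u π(a)) (u π(a))* = u π(a a*) u* = π(α(a a*)) = 0`. -/
theorem mul_apply_eq_zero_of_covariant_of_map_eq_zero
    {A B : Type*} [Ring A] [StarRing A] [Algebra ℂ A]
    [NormedRing B] [StarRing B] [CStarRing B] [Algebra ℂ B]
    (α : A →⋆ₐ[ℂ] A) (π : A →⋆ₐ[ℂ] B) (u : B)
    (hcov : ∀ x : A, u * π x * star u = π (α x)) {a : A} (ha : α a = 0) :
    u * π a = 0 := by
  refine CStarRing.mul_eq_zero_of_conj_mul_star_self_eq_zero ?_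
  rw [← map_star, ← map_mul, hcov, map_mul, ha, zero_mul, map_zero]

/-- For a representation `(π, U, H)` of `(A, α)` with `π` faithful,
the ideal `J = {a : U*U π(a) = π(a)}` is orthogonal to `ker α`: `J ∩ ker α = {0}`. -/
theorem covariance_ideal_orthogonal_to_ker
    {A : Type*} [CStarAlgebra A]
    {H : Type*} [NormedAddCommGroup H] [InnerProductSpace ℂ H] [CompleteSpace H]
    (α : A →⋆ₐ[ℂ] A) (π : A →⋆ₐ[ℂ] (H →L[ℂ] H)) (U : H →L[ℂ] H)
    (hfaithful : Function.Injective π)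
    (hcov : ∀ a : A, U * π a * star U = π (α a)) :
    {a : A | star U * U * π a = π a} ∩ {a : A | α a = 0} = {0} := by
  refine Set.eq_singleton_iff_unique_mem.mpr ⟨⟨by simp, map_zero α⟩, ?_⟩
  rintro a ⟨hJ : star U * U * π a = π a, hker : α a = 0⟩
  have hUa : U * π a = 0 := mul_apply_eq_zero_of_covariant_of_map_eq_zero α π U hcov hker
  have hπa : π a = 0 := by rw [← hJ, mul_assoc, hUa, mul_zero]
  exact (map_eq_zero_iff π hfaithful).mp hπa
end

section
/- Let A be a unital C*-algebra and α : A → A a *-endomorphism. The set I₂ = {a ∈ A : lim_{n→∞} α^n(a) = 0} coincides with the closure I₁ of {a ∈ A : α^n(a) = 0 for some n ∈ ℕ}, and this set is an α-invariant closed two-sided ideal of A such that the induced endomorphism on the quotient A/I₁ is injective. Moreover, I₁ is the smallest α-invariant closed ideal with this property. -/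
/-!
Elements with `αⁿ a = 0` for some `n` satisfy `αⁿ a → 0`, and the set `I₂` of such `a` is
closed because the iterates of `α` are contractions; hence `I₁ ⊆ I₂`. Conversely, every
⋆-homomorphism `φ` satisfies `dist(a, ker φ) ≤ ‖φ a‖`: for `δ > ‖φ a‖` take a continuous cutoff
`0 ≤ g ≤ 1` with `g = 1` on `[-‖φ a‖², ‖φ a‖²] ⊇ σ(φ(a⋆a))` and `g = 0` off `(-δ², δ²)`; then
`c = a - a g(a⋆a)` lies in `ker φ` and `‖a - c‖² = ‖g(a⋆a) a⋆a g(a⋆a)‖ ≤ δ²`. Applied to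
`φ = αⁿ` this gives `I₂ ⊆ I₁`. Invariance of `I₂` in both directions is a shift of the index,
and a closed ideal `K` with `α a ∈ K → a ∈ K` contains every `a` with `αⁿ a = 0 ∈ K`.
-/

open Filter Topology

theorem StarAlgHom.coe_pow {R A : Type*} [CommSemiring R] [Semiring A] [Algebra R A] [Star A]
    (f : A →⋆ₐ[R] A) (n : ℕ) : ⇑(f ^ n) = (⇑f)^[n] :=
  hom_coe_pow _ rfl (fun _ _ => rfl) _ _

section Dynamics

variable {X : Type*}

theorem tendsto_iterate_apply_iff [TopologicalSpace X] {f : X → X} {a x : X} :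
    Tendsto (fun n => f^[n] (f a)) atTop (𝓝 x) ↔ Tendsto (fun n => f^[n] a) atTop (𝓝 x) :=
  tendsto_add_atTop_iff_nat (f := fun n => f^[n] a) 1

theorem Function.IsFixedPt.iterate_eq_of_le {f : X → X} {a x : X} (hx : IsFixedPt f x)
    {n m : ℕ} (hn : f^[n] a = x) (hnm : n ≤ m) : f^[m] a = x := by
  obtain ⟨k, rfl⟩ := Nat.exists_eq_add_of_le' hnm
  rw [Function.iterate_add_apply, hn, Function.iterate_fixed hx]

theorem Function.IsFixedPt.tendsto_iterate [TopologicalSpace X] {f : X → X} {a x : X}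
    (hx : IsFixedPt f x) {n : ℕ} (hn : f^[n] a = x) : Tendsto (fun m => f^[m] a) atTop (𝓝 x) :=
  tendsto_atTop_of_eventually_const (i₀ := n) fun _ => hx.iterate_eq_of_le hn

theorem LipschitzWith.isClosed_setOf_tendsto_iterate [PseudoMetricSpace X] {f : X → X}
    (hf : LipschitzWith 1 f) (x : X) :
    IsClosed {a | Tendsto (fun n => f^[n] a) atTop (𝓝 x)} := by
  have hequi : Equicontinuous fun n => f^[n] :=
    (LipschitzWith.uniformEquicontinuous _ 1 fun n => by
      simpa using hf.iterate n).equicontinuous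
  exact hequi.isClosed_setOfPred_tendsto continuous_const

theorem mem_of_iterate_mem {f : X → X} {K : Set X} (hK : ∀ a, f a ∈ K → a ∈ K) (n : ℕ) {a : X}
    (h : f^[n] a ∈ K) : a ∈ K := by
  induction n generalizing a with
  | zero => exact h
  | succ n ih => exact hK a (ih (by rwa [← Function.iterate_succ_apply]))

end Dynamics

namespace TwoSidedIdeal

variable {R : Type*} [NonUnitalNonAssocRing R]

def iterateKer {F : Type*} [FunLike F R R] [NonUnitalRingHomClass F R R] (f : F) :
    TwoSidedIdeal R :=
  .mk' {a | ∃ n, f^[n] a = 0} ⟨0, rfl⟩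
    (fun ⟨m, hm⟩ ⟨k, hk⟩ => ⟨max m k, by
      rw [iterate_map_add,
        Function.IsFixedPt.iterate_eq_of_le (map_zero f) hm (le_max_left m k),
        Function.IsFixedPt.iterate_eq_of_le (map_zero f) hk (le_max_right m k), add_zero]⟩)
    (fun ⟨m, hm⟩ => ⟨m, by rw [iterate_map_neg, hm, neg_zero]⟩)
    (fun ⟨m, hm⟩ => ⟨m, by rw [iterate_map_mul, hm, mul_zero]⟩)
    (fun ⟨m, hm⟩ => ⟨m, by rw [iterate_map_mul, hm, zero_mul]⟩)

theorem coe_iterateKer {F : Type*} [FunLike F R R] [NonUnitalRingHomClass F R R] (f : F) :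
    (iterateKer f : Set R) = {a | ∃ n, f^[n] a = 0} :=
  coe_mk' ..

def topologicalClosure [TopologicalSpace R] [IsTopologicalRing R] (I : TwoSidedIdeal R) :
    TwoSidedIdeal R :=
  .mk' (closure I) (subset_closure I.zero_mem)
    (fun hx hy => map_mem_closure₂ continuous_add hx hy fun _ ha _ hb => I.add_mem ha hb)
    (fun hx => map_mem_closure continuous_neg hx fun _ ha => I.neg_mem ha)
    (fun {x _} hy => map_mem_closure (continuous_const_mul x) hy fun _ hb => I.mul_mem_left _ _ hb)
    (fun {_ y} hx => map_mem_closure (f := (· * y)) (continuous_mul_const y) hx fun _ ha => I.mul_mem_right _ _ ha)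

theorem coe_topologicalClosure [TopologicalSpace R] [IsTopologicalRing R] (I : TwoSidedIdeal R) :
    (I.topologicalClosure : Set R) = closure I := by
  unfold topologicalClosure
  exact coe_mk' ..

end TwoSidedIdeal

noncomputable def cutoff (s r t : ℝ) : ℝ := min 1 (max 0 ((r - |t|) / (r - s)))

section Cutoff

variable {s r : ℝ}

theorem continuous_cutoff (s r : ℝ) : Continuous (cutoff s r) := by
  unfold cutoff
  fun_prop

theorem cutoff_nonneg (t : ℝ) : 0 ≤ cutoff s r t := le_min zero_le_one (le_max_left _ _)

theorem cutoff_le_one (t : ℝ) : cutoff s r t ≤ 1 := min_le_left _ _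

theorem cutoff_eq_one_of_abs_le (hsr : s < r) {t : ℝ} (ht : |t| ≤ s) : cutoff s r t = 1 := by
  have : 1 ≤ (r - |t|) / (r - s) := (one_le_div (by linarith)).2 (by linarith)
  simp [cutoff, le_max_of_le_right this]

theorem cutoff_eq_zero_of_le_abs (hsr : s < r) {t : ℝ} (ht : r ≤ |t|) : cutoff s r t = 0 := by
  have : (r - |t|) / (r - s) ≤ 0 := div_nonpos_of_nonpos_of_nonneg (by linarith) (by linarith)
  simp [cutoff, this]

theorem abs_cutoff_mul_self_mul_le (hs : 0 ≤ s) (hsr : s < r) (t : ℝ) :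
    |cutoff s r t * t * cutoff s r t| ≤ r := by
  rcases le_or_gt r |t| with ht | ht
  · simp [cutoff_eq_zero_of_le_abs hsr ht]
    linarith
  · rw [abs_mul, abs_mul, abs_of_nonneg (cutoff_nonneg t)]
    have hg : cutoff s r t * cutoff s r t ≤ 1 :=
      mul_le_one₀ (cutoff_le_one t) (cutoff_nonneg t) (cutoff_le_one t)
    nlinarith [mul_le_mul_of_nonneg_right hg (abs_nonneg t)]

end Cutoff

section CStarAlgebra

variable {A B : Type*} [CStarAlgebra A] [CStarAlgebra B]

theorem norm_mul_cfc_sq (a : A) {g : ℝ → ℝ} (hg : Continuous g) :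
    ‖a * cfc g (star a * a)‖ ^ 2 = ‖cfc (fun t => g t * t * g t) (star a * a)‖ := by
  have hcfc : cfc (fun t => g t * t * g t) (star a * a)
      = cfc g (star a * a) * (star a * a) * cfc g (star a * a) := by
    rw [cfc_mul (fun t => g t * t) g, cfc_mul g (fun t => t), cfc_id' ℝ (star a * a)]
  rw [hcfc, sq, ← CStarRing.norm_star_mul_self, star_mul, (cfc_predicate g (star a * a)).star_eq]
  simp only [mul_assoc]

theorem StarAlgHom.lipschitzWith_one (φ : A →⋆ₐ[ℂ] B) : LipschitzWith 1 φ := by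
  simpa using AddMonoidHomClass.lipschitz_of_bound φ 1 fun x => by
    simpa using NonUnitalStarAlgHom.norm_apply_le φ x

theorem StarAlgHom.exists_map_eq_zero_norm_sub_le (φ : A →⋆ₐ[ℂ] B) (a : A) {δ : ℝ}
    (hδ : ‖φ a‖ < δ) : ∃ c, φ c = 0 ∧ ‖a - c‖ ≤ δ := by
  have hsr : ‖φ a‖ ^ 2 < δ ^ 2 := by gcongr
  set g := cutoff (‖φ a‖ ^ 2) (δ ^ 2)
  have hg : Continuous g := continuous_cutoff _ _
  have hp : IsSelfAdjoint (star a * a) := .star_mul_self a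
  have hg_one : (spectrum ℝ (φ (star a * a))).EqOn g 1 := fun t ht => by
    rcases subsingleton_or_nontrivial B with _ | _
    · simp [spectrum.of_subsingleton] at ht
    have := spectrum.norm_le_norm_of_mem ht
    rw [map_mul, map_star, CStarRing.norm_star_mul_self, ← sq, Real.norm_eq_abs] at this
    exact cutoff_eq_one_of_abs_le hsr this
  refine ⟨a - a * cfc g (star a * a), ?_, ?_⟩
  · rw [map_sub, map_mul, φ.map_cfc g _ hg.continuousOn φ.lipschitzWith_one.continuous hp (hp.map φ),
      cfc_congr hg_one, Pi.one_def, cfc_const_one ℝ _ (hp.map φ), mul_one, sub_self]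
  · rw [sub_sub_cancel, ← pow_le_pow_iff_left₀ (norm_nonneg _) (hδ.le.trans' (norm_nonneg _))
      two_ne_zero, norm_mul_cfc_sq a hg]
    exact norm_cfc_le (by positivity) fun t _ => abs_cutoff_mul_self_mul_le (by positivity) hsr t

theorem StarAlgHom.infDist_setOf_map_eq_zero_le (φ : A →⋆ₐ[ℂ] B) (a : A) :
    Metric.infDist a {c | φ c = 0} ≤ ‖φ a‖ := by
  refine le_of_forall_gt_imp_ge_of_dense fun δ hδ => ?_
  obtain ⟨c, hc, hac⟩ := φ.exists_map_eq_zero_norm_sub_le a hδ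
  exact (Metric.infDist_le_dist_of_mem (s := {c | φ c = 0}) hc).trans ((dist_eq_norm a c).trans_le hac)

theorem StarAlgHom.setOf_tendsto_iterate_eq_closure (α : A →⋆ₐ[ℂ] A) :
    {a | Tendsto (fun n => α^[n] a) atTop (𝓝 0)} = closure {a | ∃ n, α^[n] a = 0} := by
  refine subset_antisymm (fun a ha => ?_) <|
    closure_minimal (fun a ⟨n, hn⟩ => Function.IsFixedPt.tendsto_iterate (map_zero α) hn)
      (α.lipschitzWith_one.isClosed_setOf_tendsto_iterate 0)
  have hN : {a | ∃ n, α^[n] a = 0}.Nonempty := ⟨0, 0, rfl⟩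
  rw [Metric.mem_closure_iff_infDist_zero hN]
  refine le_antisymm (ge_of_tendsto' (tendsto_zero_iff_norm_tendsto_zero.1 ha) fun n => ?_)
    Metric.infDist_nonneg
  calc Metric.infDist a {a | ∃ n, α^[n] a = 0}
      ≤ Metric.infDist a {c | (α ^ n) c = 0} :=
        Metric.infDist_le_infDist_of_subset (fun c hc => ⟨n, by rwa [← α.coe_pow]⟩) ⟨0, map_zero _⟩
    _ ≤ ‖α^[n] a‖ := α.coe_pow n ▸ (α ^ n).infDist_setOf_map_eq_zero_le a

end CStarAlgebra

/-- For a *-endomorphism `α` of a unital C*-algebra `A`, the set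
`I₂ = {a : αⁿ(a) → 0}` coincides with the closure `I₁` of `{a : αⁿ(a) = 0 for some n}`;
this set is an `α`-invariant closed two-sided ideal such that the induced endomorphism of
`A/I₁` is injective (equivalently `α(a) ∈ I₁ → a ∈ I₁`), and it is the smallest
`α`-invariant closed ideal with this property. -/
theorem limit_ideal_properties
    {A : Type*} [CStarAlgebra A] (α : A →⋆ₐ[ℂ] A) :
    {a : A | Tendsto (fun n => (⇑α)^[n] a) atTop (𝓝 0)}
      = closure {a : A | ∃ n : ℕ, (⇑α)^[n] a = 0} ∧
    IsClosed (closure {a : A | ∃ n : ℕ, (⇑α)^[n] a = 0}) ∧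
    (∃ I : TwoSidedIdeal A, (I : Set A) = closure {a : A | ∃ n : ℕ, (⇑α)^[n] a = 0}) ∧
    (∀ a ∈ closure {a : A | ∃ n : ℕ, (⇑α)^[n] a = 0},
      α a ∈ closure {a : A | ∃ n : ℕ, (⇑α)^[n] a = 0}) ∧
    (∀ a : A, α a ∈ closure {a : A | ∃ n : ℕ, (⇑α)^[n] a = 0} →
      a ∈ closure {a : A | ∃ n : ℕ, (⇑α)^[n] a = 0}) ∧
    (∀ K : TwoSidedIdeal A, IsClosed (K : Set A) →
      (∀ a ∈ K, α a ∈ K) → (∀ a : A, α a ∈ K → a ∈ K) →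
      closure {a : A | ∃ n : ℕ, (⇑α)^[n] a = 0} ⊆ (K : Set A)) := by
  have hI₂ := α.setOf_tendsto_iterate_eq_closure
  refine ⟨hI₂, isClosed_closure, ⟨(TwoSidedIdeal.iterateKer α).topologicalClosure, by
      rw [TwoSidedIdeal.coe_topologicalClosure, TwoSidedIdeal.coe_iterateKer]⟩,
    fun a ha => ?_, fun a ha => ?_, fun K hK _ hK_back => ?_⟩
  · rw [← hI₂] at ha ⊢
    exact tendsto_iterate_apply_iff.2 ha
  · rw [← hI₂] at ha ⊢
    exact tendsto_iterate_apply_iff.1 ha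
  · exact closure_minimal (fun a ⟨n, hn⟩ => mem_of_iterate_mem hK_back n (hn ▸ K.zero_mem)) hK
end

section
/- Let A be a unital C*-algebra, α : A → A a *-endomorphism with kernel I, and J a closed ideal orthogonal to I (i.e. I ∩ J = {0}). On A_J := (A/I) ⊕ (A/J), define α_J((a+I) ⊕ (b+J)) = (α(a)+I) ⊕ (α(a)+J). Then α_J is a well-defined *-endomorphism of A_J, ker α_J = {0} ⊕ (A/J), and the annihilator of ker α_J in A_J equals (A/I) ⊕ {0}; in particular ker α_J is a unital ideal with unit 0 ⊕ (1+J). -/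
/-!
Since `ker α = ker qI`, the map `a ↦ (qI (α a), qJ (α a))` descends along `qI` to a
*-homomorphism `B → B × C`; precomposing with the first projection gives `α_J`. The descended
map is injective: if `qI (α a) = 0 = qJ (α a)`, then `α a ∈ I ∩ J = {0}`, so `a ∈ I`. Hence `ker α_J` is
exactly `{0} × C`, whose annihilator in the product is `B × {0}` and whose unit is `(0, 1)`.
-/

namespace StarAlgHom

variable {R A B C : Type*} [CommSemiring R] [Ring A] [Algebra R A] [Star A]
  [Ring B] [Algebra R B] [Star B] [Ring C] [Algebra R C] [Star C]

noncomputable def liftOfSurjective (f : A →⋆ₐ[R] B) (hf : Function.Surjective f)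
    (g : A →⋆ₐ[R] C) (hg : RingHom.ker f ≤ RingHom.ker g) : B →⋆ₐ[R] C where
  toRingHom := (f : A →+* B).liftOfSurjective hf ⟨(g : A →+* C), hg⟩
  commutes' r := by
    have lift_apply (a : A) := (f : A →+* B).liftOfSurjective_comp_apply hf ⟨(g : A →+* C), hg⟩ a
    exact (congrArg _ (f.commutes r).symm).trans <| (lift_apply _).trans (g.commutes r)
  map_star' b := by
    have lift_apply (a : A) := (f : A →+* B).liftOfSurjective_comp_apply hf ⟨(g : A →+* C), hg⟩ a
    obtain ⟨a, rfl⟩ := hf b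
    exact (congrArg _ (map_star f a).symm).trans <|
      (lift_apply (star a)).trans <| (map_star g a).trans (congrArg star (lift_apply a).symm)

@[simp]
theorem liftOfSurjective_apply_apply (f : A →⋆ₐ[R] B) (hf : Function.Surjective f)
    (g : A →⋆ₐ[R] C) (hg : RingHom.ker f ≤ RingHom.ker g) (a : A) :
    liftOfSurjective f hf g hg (f a) = g a :=
  (f : A →+* B).liftOfSurjective_comp_apply hf ⟨(g : A →+* C), hg⟩ a

theorem liftOfSurjective_eq_zero_iff (f : A →⋆ₐ[R] B) (hf : Function.Surjective f)
    (g : A →⋆ₐ[R] C) (hg : RingHom.ker f ≤ RingHom.ker g) (hgf : RingHom.ker g ≤ RingHom.ker f)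
    {b : B} : liftOfSurjective f hf g hg b = 0 ↔ b = 0 := by
  obtain ⟨a, rfl⟩ := hf b
  rw [liftOfSurjective_apply_apply]
  exact ⟨fun h => hgf h, fun h => hg h⟩

end StarAlgHom

theorem Prod.forall_fst_eq_zero_mul_eq_zero_iff {B C : Type*} [MulZeroOneClass B]
    [MulZeroOneClass C] {x : B × C} : (∀ y : B × C, y.1 = 0 → x * y = 0) ↔ x.2 = 0 := by
  refine ⟨fun h => by simpa using congrArg Prod.snd (h (0, 1) rfl), fun hx y hy => ?_⟩
  simp [Prod.ext_iff, hx, hy]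

theorem extension_endomorphism_properties_general
    {A : Type*} [CStarAlgebra A]
    {B : Type*} [CStarAlgebra B] {C : Type*} [CStarAlgebra C]
    (α : A →⋆ₐ[ℂ] A) (J : TwoSidedIdeal A)
    (horth : {a : A | α a = 0} ∩ (J : Set A) = {0})
    (qI : A →⋆ₐ[ℂ] B) (hqI : Function.Surjective qI)
    (hkerI : ∀ a : A, qI a = 0 ↔ α a = 0)
    (qJ : A →⋆ₐ[ℂ] C)
    (hkerJ : ∀ a : A, qJ a = 0 ↔ a ∈ J) :
    ∃ β : (B × C) →⋆ₐ[ℂ] (B × C),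
      (∀ a b : A, β (qI a, qJ b) = (qI (α a), qJ (α a))) ∧
      {x : B × C | β x = 0} = {x : B × C | x.1 = 0} ∧
      {x : B × C | ∀ y : B × C, β y = 0 → x * y = 0} = {x : B × C | x.2 = 0} ∧
      β (0, 1) = 0 ∧
      (∀ y : B × C, β y = 0 → ((0, 1) : B × C) * y = y ∧ y * ((0, 1) : B × C) = y) := by
  let F : A →⋆ₐ[ℂ] B × C := (qI.comp α).prod (qJ.comp α)
  have ker_qI_le : RingHom.ker qI ≤ RingHom.ker F := fun a (ha : qI a = 0) => by
    change (qI (α a), qJ (α a)) = 0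
    simp [(hkerI a).mp ha]
  have ker_F_le : RingHom.ker F ≤ RingHom.ker qI := fun a (ha : F a = 0) => by
    have hαa : α a ∈ {a : A | α a = 0} ∩ (J : Set A) :=
      ⟨(hkerI _).mp (congrArg Prod.fst ha), (hkerJ _).mp (congrArg Prod.snd ha)⟩
    rw [horth] at hαa
    exact (hkerI a).mpr hαa
  let β := (StarAlgHom.liftOfSurjective qI hqI F ker_qI_le).comp (StarAlgHom.fst ℂ B C)
  have ker_β (x : B × C) : β x = 0 ↔ x.1 = 0 :=
    StarAlgHom.liftOfSurjective_eq_zero_iff qI hqI F ker_qI_le ker_F_le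
  refine ⟨β, fun a _ => StarAlgHom.liftOfSurjective_apply_apply qI hqI F ker_qI_le a, ?_, ?_,
    (ker_β _).mpr rfl, fun y hy => ?_⟩
  · exact Set.ext ker_β
  · ext x
    simpa only [ker_β, Set.mem_ofPred_eq] using Prod.forall_fst_eq_zero_mul_eq_zero_iff
  · simp [Prod.ext_iff, (ker_β y).mp hy]

/-- Let `α` be a *-endomorphism of a unital C*-algebra `A` with kernel `I`,
and `J` a closed ideal with `I ∩ J = {0}`. Realizing the quotients `A/I` and `A/J` as
codomains of surjective *-homomorphisms `qI`, `qJ` with the corresponding kernels, the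
formula `α_J(qI a, qJ b) = (qI (α a), qJ (α a))` gives a well-defined *-endomorphism `β`
of `A_J = (A/I) ⊕ (A/J)`, whose kernel is `{0} ⊕ A/J`, whose kernel's annihilator is
`(A/I) ⊕ {0}`, and the kernel is unital with unit `(0, 1)`. -/
theorem extension_endomorphism_properties
    {A : Type*} [CStarAlgebra A]
    {B : Type*} [CStarAlgebra B] {C : Type*} [CStarAlgebra C]
    (α : A →⋆ₐ[ℂ] A) (J : TwoSidedIdeal A) (hJc : IsClosed (J : Set A))
    (horth : {a : A | α a = 0} ∩ (J : Set A) = {0})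
    (qI : A →⋆ₐ[ℂ] B) (hqI : Function.Surjective qI)
    (hkerI : ∀ a : A, qI a = 0 ↔ α a = 0)
    (qJ : A →⋆ₐ[ℂ] C) (hqJ : Function.Surjective qJ)
    (hkerJ : ∀ a : A, qJ a = 0 ↔ a ∈ J) :
    ∃ β : (B × C) →⋆ₐ[ℂ] (B × C),
      (∀ a b : A, β (qI a, qJ b) = (qI (α a), qJ (α a))) ∧
      {x : B × C | β x = 0} = {x : B × C | x.1 = 0} ∧
      {x : B × C | ∀ y : B × C, β y = 0 → x * y = 0} = {x : B × C | x.2 = 0} ∧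
      β (0, 1) = 0 ∧
      (∀ y : B × C, β y = 0 → ((0, 1) : B × C) * y = y ∧ y * ((0, 1) : B × C) = y) :=
  extension_endomorphism_properties_general α J horth qI hqI hkerI qJ hkerJ
end
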